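/- If (U, R, 𝓕) is an sL-approximation space, then (𝔠(U, R, 𝓕), ⊆) is an sL-domain. -/

import Mathlib

open Set

/-- The upper approximation operator: `upp R A = {x | ∃ y ∈ A, x R y}`. -/
def upp {U : Type*} (R : U → U → Prop) (A : Set U) : Set U := {x | ∃ y ∈ A, R x y}

/-- `(U, R, 𝓕)` is a CF-approximation space. -/
def IsCFApprox {U : Type*} (R : U → U → Prop) (𝓕 : Set (Set U)) : Prop :=
  Transitive R ∧ 𝓕.Nonempty ∧ (∀ F ∈ 𝓕, F.Finite) ∧
    ∀ F ∈ 𝓕, ∀ K : Set U, K.Finite → K ⊆ upp R F →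
      ∃ G ∈ 𝓕, K ⊆ upp R G ∧ G ⊆ upp R F

/-- `E` is a CF-closed set of `(U, R, 𝓕)`. -/
def CFClosed {U : Type*} (R : U → U → Prop) (𝓕 : Set (Set U)) (E : Set U) : Prop :=
  ∀ K : Set U, K.Finite → K ⊆ E →
    ∃ F ∈ 𝓕, K ⊆ upp R F ∧ upp R F ⊆ E ∧ F ⊆ E

/-- The join saturation `𝓕^♯`: all unions of nonempty finite subfamilies of `𝓕`. -/
def joinSat {U : Type*} (𝓕 : Set (Set U)) : Set (Set U) :=
  {A | ∃ 𝓐 : Set (Set U), 𝓐 ⊆ 𝓕 ∧ 𝓐.Finite ∧ 𝓐.Nonempty ∧ A = ⋃₀ 𝓐}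

/-- `S(M, F)`: the set of `G ∈ 𝓕` satisfying (sL-1) and (sL-2). -/
def SFam {U : Type*} (R : U → U → Prop) (𝓕 : Set (Set U)) (M F : Set U) : Set (Set U) :=
  {G | G ∈ 𝓕 ∧ upp R M ⊆ upp R G ∧ upp R G ⊆ upp R F ∧
    ∀ G' ∈ 𝓕, upp R M ⊆ upp R G' → upp R G' ⊆ upp R F → upp R G ⊆ upp R G'}

/-- `S*(M, F) = {G ∈ S(M, F) | G ⊆ upp R F}`. -/
def SStar {U : Type*} (R : U → U → Prop) (𝓕 : Set (Set U)) (M F : Set U) : Set (Set U) :=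
  {G | G ∈ SFam R 𝓕 M F ∧ G ⊆ upp R F}

/-- sL-approximation space. -/
def IsSLApprox {U : Type*} (R : U → U → Prop) (𝓕 : Set (Set U)) : Prop :=
  IsCFApprox R 𝓕 ∧
    ∀ M ∈ joinSat 𝓕, ∀ F ∈ 𝓕, M ⊆ upp R F → (SFam R 𝓕 M F).Nonempty

/-- L-approximation space. -/
def IsLApprox {U : Type*} (R : U → U → Prop) (𝓕 : Set (Set U)) : Prop :=
  IsCFApprox R 𝓕 ∧
    ∀ M ∈ joinSat 𝓕 ∪ {(∅ : Set U)}, ∀ F ∈ 𝓕, M ⊆ upp R F → (SFam R 𝓕 M F).Nonempty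

/-- bc-approximation space. -/
def IsBCApprox {U : Type*} (R : U → U → Prop) (𝓕 : Set (Set U)) : Prop :=
  IsCFApprox R 𝓕 ∧
    ∀ M ∈ joinSat 𝓕 ∪ {(∅ : Set U)}, ∀ F ∈ 𝓕, M ⊆ upp R F →
      ∃ G ∈ 𝓕, upp R M ⊆ upp R G ∧ upp R G ⊆ upp R F ∧
        ∀ G' ∈ 𝓕, upp R M ⊆ upp R G' → upp R G ⊆ upp R G'

/-- A dcpo: every (nonempty) directed subset has a supremum. -/
def IsDcpo (P : Type*) [PartialOrder P] : Prop :=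
  ∀ D : Set P, D.Nonempty → DirectedOn (· ≤ ·) D → ∃ s, IsLUB D s

/-- The way-below relation `x ≪ y`. -/
def WayBelow {P : Type*} [PartialOrder P] (x y : P) : Prop :=
  ∀ D : Set P, D.Nonempty → DirectedOn (· ≤ ·) D →
    ∀ s, IsLUB D s → y ≤ s → ∃ d ∈ D, x ≤ d

/-- Continuous domain: a dcpo in which for every `x` the set `{z | z ≪ x}` is
directed with supremum `x`. -/
def IsContinuousDomain (P : Type*) [PartialOrder P] : Prop :=
  IsDcpo P ∧ ∀ x : P, {z | WayBelow z x}.Nonempty ∧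
    DirectedOn (· ≤ ·) {z | WayBelow z x} ∧ IsLUB {z | WayBelow z x} x

/-- Algebraic domain: a dcpo in which for every `x` the set `↓x ∩ K(P)` is
directed with supremum `x`. -/
def IsAlgebraicDomain (P : Type*) [PartialOrder P] : Prop :=
  IsDcpo P ∧ ∀ x : P, ({k | k ≤ x ∧ WayBelow k k}).Nonempty ∧
    DirectedOn (· ≤ ·) {k | k ≤ x ∧ WayBelow k k} ∧
    IsLUB {k | k ≤ x ∧ WayBelow k k} x

/-- sL-domain: a continuous domain in which every principal ideal is a
sup-semilattice. -/
def IsSLDomain (P : Type*) [PartialOrder P] : Prop :=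
  IsContinuousDomain P ∧ ∀ x a b : P, a ≤ x → b ≤ x →
    ∃ s, s ≤ x ∧ a ≤ s ∧ b ≤ s ∧ ∀ t, t ≤ x → a ≤ t → b ≤ t → s ≤ t

/-- L-domain: a continuous domain in which every principal ideal is a
complete lattice (every subset of `↓x` has a least upper bound in `↓x`). -/
def IsLDomain (P : Type*) [PartialOrder P] : Prop :=
  IsContinuousDomain P ∧ ∀ (x : P) (A : Set P), (∀ a ∈ A, a ≤ x) →
    ∃ s, s ≤ x ∧ (∀ a ∈ A, a ≤ s) ∧ ∀ t, t ≤ x → (∀ a ∈ A, a ≤ t) → s ≤ t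

/-- bc-domain: a continuous domain in which every up-bounded subset has a
supremum. -/
def IsBCDomain (P : Type*) [PartialOrder P] : Prop :=
  IsContinuousDomain P ∧ ∀ A : Set P, (∃ b, ∀ a ∈ A, a ≤ b) → ∃ s, IsLUB A s

/-!
The CF-closed sets are closed under directed unions, so they form a dcpo; for a closed `E`, the
sets `upp R F` with `F ∈ 𝓕, F ⊆ E` form a directed family of elements way below `E` whose union
is `E`.

For the sL-property fix a closed `E`. For `M ∈ 𝓕^♯` with `M ⊆ E`, any `G ∈ S(M, F)` with
`F ∈ 𝓕, F ⊆ E` yields the least `upp R G'` (`G' ∈ 𝓕`) containing `upp R M` and contained in some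
`upp R F'` with `F' ∈ 𝓕, F' ⊆ E`, because enlarging `F` does not change `upp R G`. The join in
`↓E` of a nonempty family of closed subsets of `E` is the union of these least sets over all
`M ∈ 𝓕^♯` contained in the union of the family, a directed union since `𝓕^♯` is closed under
binary unions.
-/

section

variable {U : Type*} {R : U → U → Prop} {𝓕 : Set (Set U)}

lemma upp_mono {A B : Set U} (h : A ⊆ B) : upp R A ⊆ upp R B :=
  fun _ ⟨y, hy, hr⟩ => ⟨y, h hy, hr⟩

lemma upp_subset_upp_of_subset_upp (hT : Transitive R) {A B : Set U} (h : B ⊆ upp R A) :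
    upp R B ⊆ upp R A := by
  rintro x ⟨y, hy, hxy⟩
  obtain ⟨z, hz, hyz⟩ := h hy
  exact ⟨z, hz, hT hxy hyz⟩

lemma mem_joinSat_of_mem {F : Set U} (hF : F ∈ 𝓕) : F ∈ joinSat 𝓕 :=
  ⟨{F}, singleton_subset_iff.2 hF, finite_singleton F, singleton_nonempty F,
    (sUnion_singleton F).symm⟩

lemma union_mem_joinSat {M₁ M₂ : Set U} (h₁ : M₁ ∈ joinSat 𝓕) (h₂ : M₂ ∈ joinSat 𝓕) :
    M₁ ∪ M₂ ∈ joinSat 𝓕 := by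
  obtain ⟨𝓐₁, hsub₁, hfin₁, hne₁, rfl⟩ := h₁
  obtain ⟨𝓐₂, hsub₂, hfin₂, -, rfl⟩ := h₂
  exact ⟨𝓐₁ ∪ 𝓐₂, union_subset hsub₁ hsub₂, hfin₁.union hfin₂, hne₁.mono subset_union_left,
    (sUnion_union 𝓐₁ 𝓐₂).symm⟩

lemma finite_of_mem_joinSat (hfin : ∀ F ∈ 𝓕, F.Finite) {M : Set U} (hM : M ∈ joinSat 𝓕) :
    M.Finite := by
  obtain ⟨𝓐, hsub, h𝓐, -, rfl⟩ := hM
  exact h𝓐.sUnion fun F hF => hfin F (hsub hF)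

namespace CFClosed

lemma exists_subset_upp {E K : Set U} (hE : CFClosed R 𝓕 E) (hK : K.Finite) (hKE : K ⊆ E) :
    ∃ F ∈ 𝓕, F ⊆ E ∧ K ⊆ upp R F := by
  obtain ⟨F, hF, hKF, -, hFE⟩ := hE K hK hKE
  exact ⟨F, hF, hFE, hKF⟩

lemma exists_mem_upp {E : Set U} (hE : CFClosed R 𝓕 E) {x : U} (hx : x ∈ E) :
    ∃ F ∈ 𝓕, F ⊆ E ∧ x ∈ upp R F := by
  obtain ⟨F, hF, hFE, hxF⟩ := hE.exists_subset_upp (finite_singleton x) (singleton_subset_iff.2 hx)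
  exact ⟨F, hF, hFE, singleton_subset_iff.1 hxF⟩

lemma upp_subset (hT : Transitive R) {E F : Set U} (hE : CFClosed R 𝓕 E) (hF : F.Finite)
    (hFE : F ⊆ E) : upp R F ⊆ E := by
  obtain ⟨H, -, hFH, hHE, -⟩ := hE F hF hFE
  exact (upp_subset_upp_of_subset_upp hT hFH).trans hHE

lemma exists_upp_subset_upp {E F₁ F₂ : Set U} (hCF : IsCFApprox R 𝓕) (hE : CFClosed R 𝓕 E)
    (hF₁ : F₁ ∈ 𝓕) (hF₁E : F₁ ⊆ E) (hF₂ : F₂ ∈ 𝓕) (hF₂E : F₂ ⊆ E) :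
    ∃ F ∈ 𝓕, F ⊆ E ∧ upp R F₁ ⊆ upp R F ∧ upp R F₂ ⊆ upp R F := by
  obtain ⟨F, hF, hFE, hsub⟩ := hE.exists_subset_upp
    ((hCF.2.2.1 F₁ hF₁).union (hCF.2.2.1 F₂ hF₂)) (union_subset hF₁E hF₂E)
  exact ⟨F, hF, hFE, upp_subset_upp_of_subset_upp hCF.1 (subset_union_left.trans hsub),
    upp_subset_upp_of_subset_upp hCF.1 (subset_union_right.trans hsub)⟩

end CFClosed

lemma IsCFApprox.cfClosed_upp (hCF : IsCFApprox R 𝓕) {F : Set U} (hF : F ∈ 𝓕) :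
    CFClosed R 𝓕 (upp R F) := fun K hK hKF => by
  obtain ⟨G, hG, hKG, hGF⟩ := hCF.2.2.2 F hF K hK hKF
  exact ⟨G, hG, hKG, upp_subset_upp_of_subset_upp hCF.1 hGF, hGF⟩

lemma cfClosed_sUnion {𝒟 : Set (Set U)} (h : ∀ D ∈ 𝒟, CFClosed R 𝓕 D) (hne : 𝒟.Nonempty)
    (hdir : DirectedOn (· ⊆ ·) 𝒟) : CFClosed R 𝓕 (⋃₀ 𝒟) := by
  intro K hK hK𝒟
  obtain ⟨D, hD, hKD⟩ := hdir.exists_mem_subset_of_finite_of_subset_sUnion hne hK hK𝒟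
  obtain ⟨F, hF, hKF, hFD, hFD'⟩ := h D hD K hK hKD
  exact ⟨F, hF, hKF, hFD.trans (subset_sUnion_of_mem hD), hFD'.trans (subset_sUnion_of_mem hD)⟩

section Dcpo

variable {D : Set {E : Set U // CFClosed R 𝓕 E}}

lemma directedOn_image_val (hdir : DirectedOn (· ≤ ·) D) :
    DirectedOn (· ⊆ ·) (Subtype.val '' D) :=
  hdir.mono_comp fun _ _ h => h

lemma isLUB_sUnion_image_val (hne : D.Nonempty) (hdir : DirectedOn (· ≤ ·) D) :
    IsLUB D ⟨⋃₀ (Subtype.val '' D), cfClosed_sUnion (by rintro _ ⟨d, -, rfl⟩; exact d.2)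
      (hne.image _) (directedOn_image_val hdir)⟩ :=
  ⟨fun _ hd => subset_sUnion_of_mem (mem_image_of_mem _ hd),
    fun _ ht => sUnion_subset (by rintro _ ⟨d, hd, rfl⟩; exact ht hd)⟩

lemma isDcpo_cfClosed : IsDcpo {E : Set U // CFClosed R 𝓕 E} :=
  fun _ hne hdir => ⟨_, isLUB_sUnion_image_val hne hdir⟩

lemma IsCFApprox.wayBelow_upp (hCF : IsCFApprox R 𝓕) {E F : Set U} (hE : CFClosed R 𝓕 E)
    (hF : F ∈ 𝓕) (hFE : F ⊆ E) :
    WayBelow (⟨upp R F, hCF.cfClosed_upp hF⟩ : {E : Set U // CFClosed R 𝓕 E}) ⟨E, hE⟩ := by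
  intro D hne hdir s hs hEs
  have hFD : F ⊆ ⋃₀ (Subtype.val '' D) := by
    rw [hs.unique (isLUB_sUnion_image_val hne hdir)] at hEs
    exact hFE.trans hEs
  obtain ⟨_, ⟨d, hd, rfl⟩, hFd⟩ :=
    (directedOn_image_val hdir).exists_mem_subset_of_finite_of_subset_sUnion
      (hne.image _) (hCF.2.2.1 F hF) hFD
  exact ⟨d, hd, d.2.upp_subset hCF.1 (hCF.2.2.1 F hF) hFd⟩

end Dcpo

lemma WayBelow.le {P : Type*} [PartialOrder P] {x y : P} (h : WayBelow x y) : x ≤ y := by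
  obtain ⟨d, hd, hxd⟩ := h {y} (singleton_nonempty y) (directedOn_singleton y) y
    isLUB_singleton le_rfl
  exact (mem_singleton_iff.1 hd) ▸ hxd

lemma isContinuousDomain_of_directed_basis {P : Type*} [PartialOrder P] (hP : IsDcpo P)
    (hbasis : ∀ x : P, ∃ B : Set P, B.Nonempty ∧ DirectedOn (· ≤ ·) B ∧
      (∀ b ∈ B, WayBelow b x) ∧ IsLUB B x) :
    IsContinuousDomain P := by
  refine ⟨hP, fun x => ?_⟩
  obtain ⟨B, hne, hdir, hwb, hlub⟩ := hbasis x
  refine ⟨hne.mono hwb, ?_, fun _ hz => WayBelow.le hz,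
    fun _ ht => hlub.2 fun b hb => ht (hwb b hb)⟩
  intro z₁ h₁ z₂ h₂
  obtain ⟨b₁, hb₁, hzb₁⟩ := h₁ B hne hdir x hlub le_rfl
  obtain ⟨b₂, hb₂, hzb₂⟩ := h₂ B hne hdir x hlub le_rfl
  obtain ⟨b, hb, hb₁b, hb₂b⟩ := hdir b₁ hb₁ b₂ hb₂
  exact ⟨b, hwb b hb, hzb₁.trans hb₁b, hzb₂.trans hb₂b⟩

lemma IsCFApprox.isContinuousDomain (hCF : IsCFApprox R 𝓕) :
    IsContinuousDomain {E : Set U // CFClosed R 𝓕 E} := by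
  refine isContinuousDomain_of_directed_basis isDcpo_cfClosed fun ⟨E, hE⟩ =>
    ⟨{z | ∃ F ∈ 𝓕, F ⊆ E ∧ z.val = upp R F}, ?_, ?_, ?_, ?_⟩
  · obtain ⟨F, hF, hFE, -⟩ := hE.exists_subset_upp finite_empty (empty_subset E)
    exact ⟨⟨upp R F, hCF.cfClosed_upp hF⟩, F, hF, hFE, rfl⟩
  · rintro ⟨_, -⟩ ⟨F₁, hF₁, hF₁E, rfl⟩ ⟨_, -⟩ ⟨F₂, hF₂, hF₂E, rfl⟩
    obtain ⟨F, hF, hFE, h₁, h₂⟩ := hE.exists_upp_subset_upp hCF hF₁ hF₁E hF₂ hF₂E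
    exact ⟨⟨upp R F, hCF.cfClosed_upp hF⟩, ⟨F, hF, hFE, rfl⟩, h₁, h₂⟩
  · rintro ⟨_, -⟩ ⟨F, hF, hFE, rfl⟩
    exact hCF.wayBelow_upp hE hF hFE
  · refine ⟨?_, fun t ht x hx => ?_⟩
    · rintro ⟨_, -⟩ ⟨F, hF, hFE, rfl⟩
      exact hE.upp_subset hCF.1 (hCF.2.2.1 F hF) hFE
    · obtain ⟨F, hF, hFE, hxF⟩ := hE.exists_mem_upp hx
      exact @ht ⟨upp R F, hCF.cfClosed_upp hF⟩ ⟨F, hF, hFE, rfl⟩ _ hxF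

lemma upp_subset_upp_of_mem_SFam {M F₁ F₂ G₁ G₂ : Set U} (h12 : upp R F₁ ⊆ upp R F₂)
    (h₁ : G₁ ∈ SFam R 𝓕 M F₁) (h₂ : G₂ ∈ SFam R 𝓕 M F₂) : upp R G₁ ⊆ upp R G₂ :=
  h₁.2.2.2 G₂ h₂.1 h₂.2.1 ((h₂.2.2.2 G₁ h₁.1 h₁.2.1 (h₁.2.2.1.trans h12)).trans h₁.2.2.1)

def uppBetween (R : U → U → Prop) (𝓕 : Set (Set U)) (M E : Set U) : Set (Set U) :=
  {X | ∃ G ∈ 𝓕, upp R G = X ∧ upp R M ⊆ X ∧ ∃ F ∈ 𝓕, F ⊆ E ∧ X ⊆ upp R F}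

lemma uppBetween_anti {M M' E : Set U} (h : M ⊆ M') :
    uppBetween R 𝓕 M' E ⊆ uppBetween R 𝓕 M E := by
  rintro X ⟨G, hG, hGX, hM'X, hXE⟩
  exact ⟨G, hG, hGX, (upp_mono h).trans hM'X, hXE⟩

lemma IsSLApprox.exists_isLeast_uppBetween (hSL : IsSLApprox R 𝓕) {E M : Set U}
    (hE : CFClosed R 𝓕 E) (hM : M ∈ joinSat 𝓕) (hME : M ⊆ E) :
    ∃ X, IsLeast (uppBetween R 𝓕 M E) X := by
  obtain ⟨hCF, hS⟩ := hSL
  obtain ⟨F, hF, hFE, hMF⟩ := hE.exists_subset_upp (finite_of_mem_joinSat hCF.2.2.1 hM) hME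
  obtain ⟨G, hG⟩ := hS M hM F hF hMF
  refine ⟨upp R G, ⟨G, hG.1, rfl, hG.2.1, F, hF, hFE, hG.2.2.1⟩, ?_⟩
  rintro _ ⟨G', hG', rfl, hMG', F', hF', hF'E, hG'F'⟩
  obtain ⟨F'', hF'', -, hFF'', hF'F''⟩ := hE.exists_upp_subset_upp hCF hF hFE hF' hF'E
  obtain ⟨G'', hG''⟩ := hS M hM F'' hF'' (hMF.trans hFF'')
  exact (upp_subset_upp_of_mem_SFam hFF'' hG hG'').trans
    (hG''.2.2.2 G' hG' hMG' (hG'F'.trans hF'F''))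

def joinApprox (R : U → U → Prop) (𝓕 : Set (Set U)) (C E : Set U) : Set (Set U) :=
  {X | ∃ M ∈ joinSat 𝓕, M ⊆ C ∧ IsLeast (uppBetween R 𝓕 M E) X}

section JoinApprox

variable {C E : Set U}

lemma IsSLApprox.exists_mem_joinApprox (hSL : IsSLApprox R 𝓕) (hE : CFClosed R 𝓕 E)
    (hCE : C ⊆ E) {M : Set U} (hM : M ∈ joinSat 𝓕) (hMC : M ⊆ C) :
    ∃ X ∈ joinApprox R 𝓕 C E, upp R M ⊆ X := by
  obtain ⟨X, hX⟩ := hSL.exists_isLeast_uppBetween hE hM (hMC.trans hCE)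
  obtain ⟨-, -, -, hMX, -⟩ := hX.1
  exact ⟨X, ⟨M, hM, hMC, hX⟩, hMX⟩

lemma IsSLApprox.directedOn_joinApprox (hSL : IsSLApprox R 𝓕) (hE : CFClosed R 𝓕 E)
    (hCE : C ⊆ E) : DirectedOn (· ⊆ ·) (joinApprox R 𝓕 C E) := by
  rintro X₁ ⟨M₁, hM₁, hM₁C, hX₁⟩ X₂ ⟨M₂, hM₂, hM₂C, hX₂⟩
  have hM := union_mem_joinSat hM₁ hM₂
  obtain ⟨X, hX⟩ := hSL.exists_isLeast_uppBetween hE hM (union_subset hM₁C hM₂C |>.trans hCE)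
  exact ⟨X, ⟨_, hM, union_subset hM₁C hM₂C, hX⟩, hX.mono hX₁ (uppBetween_anti subset_union_left),
    hX.mono hX₂ (uppBetween_anti subset_union_right)⟩

lemma IsCFApprox.cfClosed_of_mem_joinApprox (hCF : IsCFApprox R 𝓕) {X : Set U}
    (hX : X ∈ joinApprox R 𝓕 C E) : CFClosed R 𝓕 X := by
  obtain ⟨-, -, -, ⟨G, hG, rfl, -⟩, -⟩ := hX
  exact hCF.cfClosed_upp hG

lemma IsCFApprox.sUnion_joinApprox_subset (hCF : IsCFApprox R 𝓕) {T : Set U}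
    (hT : CFClosed R 𝓕 T) (hCT : C ⊆ T) (hTE : T ⊆ E) : ⋃₀ joinApprox R 𝓕 C E ⊆ T := by
  refine sUnion_subset ?_
  rintro X ⟨M, hM, hMC, hX⟩
  obtain ⟨H, hH, hHT, hMH⟩ :=
    hT.exists_subset_upp (finite_of_mem_joinSat hCF.2.2.1 hM) (hMC.trans hCT)
  have hXH : X ⊆ upp R H :=
    hX.2 ⟨H, hH, rfl, upp_subset_upp_of_subset_upp hCF.1 hMH, H, hH, hHT.trans hTE, subset_rfl⟩
  exact hXH.trans (hT.upp_subset hCF.1 (hCF.2.2.1 H hH) hHT)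

end JoinApprox

lemma IsSLApprox.exists_join (hSL : IsSLApprox R 𝓕) {E : Set U} (hE : CFClosed R 𝓕 E)
    {𝒜 : Set (Set U)} (h𝒜 : ∀ A ∈ 𝒜, CFClosed R 𝓕 A ∧ A ⊆ E) (hne : 𝒜.Nonempty) :
    ∃ J, CFClosed R 𝓕 J ∧ J ⊆ E ∧ (∀ A ∈ 𝒜, A ⊆ J) ∧
      ∀ T, CFClosed R 𝓕 T → T ⊆ E → (∀ A ∈ 𝒜, A ⊆ T) → J ⊆ T := by
  have hCE : ⋃₀ 𝒜 ⊆ E := sUnion_subset fun A hA => (h𝒜 A hA).2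
  have hcover : ∀ A ∈ 𝒜, ∀ F ∈ 𝓕, F ⊆ A → ∃ X ∈ joinApprox R 𝓕 (⋃₀ 𝒜) E, upp R F ⊆ X :=
    fun A hA F hF hFA => hSL.exists_mem_joinApprox hE hCE (mem_joinSat_of_mem hF)
      (hFA.trans (subset_sUnion_of_mem hA))
  have hne' : (joinApprox R 𝓕 (⋃₀ 𝒜) E).Nonempty := by
    obtain ⟨A, hA⟩ := hne
    obtain ⟨F, hF, hFA, -⟩ := (h𝒜 A hA).1.exists_subset_upp finite_empty (empty_subset A)
    obtain ⟨X, hX, -⟩ := hcover A hA F hF hFA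
    exact ⟨X, hX⟩
  refine ⟨⋃₀ joinApprox R 𝓕 (⋃₀ 𝒜) E,
    cfClosed_sUnion (fun _ => hSL.1.cfClosed_of_mem_joinApprox) hne'
      (hSL.directedOn_joinApprox hE hCE),
    hSL.1.sUnion_joinApprox_subset hE hCE subset_rfl, fun A hA x hx => ?_,
    fun T hT hTE hAT => hSL.1.sUnion_joinApprox_subset hT (sUnion_subset hAT) hTE⟩
  obtain ⟨F, hF, hFA, hxF⟩ := (h𝒜 A hA).1.exists_mem_upp hx
  obtain ⟨X, hX, hFX⟩ := hcover A hA F hF hFA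
  exact ⟨X, hX, hFX hxF⟩

end

/-- if `(U, R, 𝓕)` is an sL-approximation space, then
`(𝔠(U, R, 𝓕), ⊆)` is an sL-domain. -/
theorem stmt10 {U : Type*} (R : U → U → Prop) (𝓕 : Set (Set U))
    (hSL : IsSLApprox R 𝓕) :
    IsSLDomain {E : Set U // CFClosed R 𝓕 E} := by
  refine ⟨hSL.1.isContinuousDomain, ?_⟩
  rintro ⟨E, hE⟩ ⟨A, hA⟩ ⟨B, hB⟩ hAE hBE
  obtain ⟨J, hJ, hJE, hABJ, hJleast⟩ :=
    hSL.exists_join hE (𝒜 := {A, B}) (by rintro _ (rfl | rfl); exacts [⟨hA, hAE⟩, ⟨hB, hBE⟩])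
      (insert_nonempty A {B})
  refine ⟨⟨J, hJ⟩, hJE, hABJ A (mem_insert A {B}), hABJ B (mem_insert_of_mem A rfl), ?_⟩
  rintro ⟨T, hT⟩ hTE hAT hBT
  exact hJleast T hT hTE (by rintro _ (rfl | rfl) <;> assumption)
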